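/- The map θ ↦ x(θ) := −ψ₃(θ)/(2ψ₂(θ)) = (3/2)·S₄(θ)/S₃(θ) is a continuous, strictly decreasing bijection from (0, ∞) onto (0, ∞). Equivalently, θ ↦ ψ₃(θ)/ψ₂(θ) is strictly increasing on (0, ∞), and x(θ) tends to +∞ as θ → 0⁺ and to 0 as θ → +∞. -/
import Mathlib

open Filter Set


/-- `S j z = ∑_{k=0}^∞ 1/(z+k)^j`, the series defining the polygamma functions:
`ψ₂ = −2S₃`, `ψ₃ = 6S₄`. -/
noncomputable def S (j : ℕ) (z : ℝ) : ℝ := ∑' k : ℕ, 1 / (z + k) ^ j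

lemma base_pos {θ : ℝ} (hθ : 0 < θ) (k : ℕ) : 0 < θ + (k : ℝ) :=
  add_pos_of_pos_of_nonneg hθ (Nat.cast_nonneg k)

lemma term_pos {θ : ℝ} (hθ : 0 < θ) (j k : ℕ) : 0 < 1 / (θ + (k : ℝ)) ^ j :=
  one_div_pos.mpr (pow_pos (base_pos hθ k) j)

lemma S_summable {j : ℕ} (hj : 2 ≤ j) {θ : ℝ} (hθ : 0 < θ) :
    Summable (fun k : ℕ => 1 / (θ + (k : ℝ)) ^ j) := by
  set c : ℝ := min θ 1 with hc
  have hc0 : 0 < c := lt_min hθ one_pos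
  have hc1 : c ≤ 1 := min_le_right _ _
  have hbase : Summable (fun k : ℕ => 1 / ((k : ℝ) + 1) ^ j) := by
    have h0 := (Real.summable_one_div_nat_pow (p := j)).mpr hj
    have := (summable_nat_add_iff 1).mpr h0
    refine this.congr fun n => by push_cast; ring
  refine Summable.of_nonneg_of_le (fun k => (term_pos hθ j k).le)
    (fun k => ?_) (hbase.mul_left (1 / c ^ j))
  have hck : c * ((k : ℝ) + 1) ≤ θ + k := by
    have h1 : c ≤ θ := min_le_left _ _
    have h2 : c * k ≤ 1 * k := mul_le_mul_of_nonneg_right hc1 (Nat.cast_nonneg k)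
    nlinarith
  have hpow : c ^ j * ((k : ℝ) + 1) ^ j ≤ (θ + k) ^ j := by
    rw [← mul_pow]
    exact pow_le_pow_left₀ (by positivity) hck j
  rw [div_mul_div_comm, one_mul]
  exact one_div_le_one_div_of_le (by positivity) hpow

lemma S_pos {j : ℕ} (hj : 2 ≤ j) {θ : ℝ} (hθ : 0 < θ) : 0 < S j θ :=
  Summable.tsum_pos (S_summable hj hθ) (fun k => (term_pos hθ j k).le) 0 (term_pos hθ j 0)

lemma S_nonneg {j : ℕ} {θ : ℝ} (hθ : 0 < θ) : 0 ≤ S j θ :=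
  tsum_nonneg fun k => (term_pos hθ j k).le

lemma pair_pos {d m p1 p2 : ℝ} (hd : 0 < d) (hp1 : 0 < p1) (hp2 : 0 < p2)
    (h3 : p1 - p2 = d * m * (p1 * p2)) :
    0 < (d + m) * p1 ^ 4 + (d - m) * p2 ^ 4 := by
  have hm4 : 0 ≤ m * (p1 ^ 4 - p2 ^ 4) := by
    have he : m * (p1 ^ 4 - p2 ^ 4)
        = (m * (p1 - p2)) * (p1 ^ 3 + p1 ^ 2 * p2 + p1 * p2 ^ 2 + p2 ^ 3) := by ring
    rw [he]
    apply mul_nonneg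
    · have : m * (p1 - p2) = d * m ^ 2 * (p1 * p2) := by rw [h3]; ring
      rw [this]
      positivity
    · positivity
  have hrw : (d + m) * p1 ^ 4 + (d - m) * p2 ^ 4
      = d * (p1 ^ 4 + p2 ^ 4) + m * (p1 ^ 4 - p2 ^ 4) := by ring
  rw [hrw]
  have hpos : 0 < d * (p1 ^ 4 + p2 ^ 4) := mul_pos hd (by positivity)
  linarith

set_option maxHeartbeats 2000000 in
lemma S_mul_lt {a b : ℝ} (ha : 0 < a) (hab : a < b) : S 4 b * S 3 a < S 4 a * S 3 b := by
  have hb : 0 < b := ha.trans hab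
  set u : ℕ → ℝ := fun k => 1 / (a + k) with hu
  set v : ℕ → ℝ := fun k => 1 / (b + k) with hv
  have hu_pos : ∀ k, 0 < u k := fun k => one_div_pos.mpr (base_pos ha k)
  have hv_pos : ∀ k, 0 < v k := fun k => one_div_pos.mpr (base_pos hb k)
  have hSu : ∀ j, S j a = ∑' k : ℕ, u k ^ j := by
    intro j; exact tsum_congr fun k => by rw [hu, one_div_pow]
  have hSv : ∀ j, S j b = ∑' k : ℕ, v k ^ j := by
    intro j; exact tsum_congr fun k => by rw [hv, one_div_pow]
  have hsu : ∀ j, 2 ≤ j → Summable (fun k : ℕ => u k ^ j) := fun j hj =>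
    (S_summable hj ha).congr fun k => by rw [hu, one_div_pow]
  have hsv : ∀ j, 2 ≤ j → Summable (fun k : ℕ => v k ^ j) := fun j hj =>
    (S_summable hj hb).congr fun k => by rw [hv, one_div_pow]
  have hP : Summable (fun p : ℕ × ℕ => u p.1 ^ 4 * v p.2 ^ 3) :=
    (hsu 4 (by norm_num)).mul_of_nonneg (hsv 3 (by norm_num))
      (fun k => (pow_pos (hu_pos k) 4).le) (fun k => (pow_pos (hv_pos k) 3).le)
  have hQ : Summable (fun p : ℕ × ℕ => v p.1 ^ 4 * u p.2 ^ 3) :=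
    (hsv 4 (by norm_num)).mul_of_nonneg (hsu 3 (by norm_num))
      (fun k => (pow_pos (hv_pos k) 4).le) (fun k => (pow_pos (hu_pos k) 3).le)
  have hm1 : S 4 a * S 3 b = ∑' p : ℕ × ℕ, u p.1 ^ 4 * v p.2 ^ 3 := by
    rw [hSu 4, hSv 3]
    exact Summable.tsum_mul_tsum (hsu 4 (by norm_num)) (hsv 3 (by norm_num)) hP
  have hm2 : S 4 b * S 3 a = ∑' p : ℕ × ℕ, v p.1 ^ 4 * u p.2 ^ 3 := by
    rw [hSv 4, hSu 3]
    exact Summable.tsum_mul_tsum (hsv 4 (by norm_num)) (hsu 3 (by norm_num)) hQ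
  rw [hm1, hm2, ← sub_pos, ← Summable.tsum_sub hP hQ]
  set F : ℕ × ℕ → ℝ := fun p => u p.1 ^ 4 * v p.2 ^ 3 - v p.1 ^ 4 * u p.2 ^ 3 with hF
  have hFs : Summable F := hP.sub hQ
  have hFsw : Summable (fun p : ℕ × ℕ => F p.swap) := hFs.prod_symm
  have hswap : ∑' p : ℕ × ℕ, F p.swap = ∑' p, F p := by
    exact ((Equiv.prodComm ℕ ℕ).tsum_eq F)
  -- positivity of the symmetrized terms
  have hGpos : ∀ p : ℕ × ℕ, 0 < F p + F p.swap := by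
    rintro ⟨k, l⟩
    set d : ℝ := b - a with hd
    have hd0 : 0 < d := sub_pos.mpr hab
    set m : ℝ := (l : ℝ) - (k : ℝ) with hm
    set p1 : ℝ := u k * v l with hp1d
    set p2 : ℝ := u l * v k with hp2d
    have hp1 : 0 < p1 := mul_pos (hu_pos k) (hv_pos l)
    have hp2 : 0 < p2 := mul_pos (hu_pos l) (hv_pos k)
    have hak : (0:ℝ) < a + k := base_pos ha k
    have hal : (0:ℝ) < a + l := base_pos ha l
    have hbk : (0:ℝ) < b + k := base_pos hb k
    have hbl : (0:ℝ) < b + l := base_pos hb l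
    have h1 : u k - v l = (d + m) * p1 := by
      rw [hp1d, hu, hv, hd, hm]; field_simp; ring
    have h2 : u l - v k = (d - m) * p2 := by
      rw [hp2d, hu, hv, hd, hm]; field_simp; ring
    have h3 : p1 - p2 = d * m * (p1 * p2) := by
      rw [hp1d, hp2d, hu, hv, hd, hm]; field_simp; ring
    have hGe : F (k, l) + F ((k, l) : ℕ × ℕ).swap
        = (d + m) * p1 ^ 4 + (d - m) * p2 ^ 4 := by
      have e1 : F (k, l) + F ((k, l) : ℕ × ℕ).swap
          = u k ^ 3 * v l ^ 3 * (u k - v l) + u l ^ 3 * v k ^ 3 * (u l - v k) := by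
        simp only [hF, Prod.swap_prod_mk]; ring
      rw [e1, h1, h2, hp1d, hp2d]; ring
    rw [hGe]
    exact pair_pos hd0 hp1 hp2 h3
  have h2sum : 0 < ∑' p : ℕ × ℕ, (F p + F p.swap) :=
    Summable.tsum_pos (hFs.add hFsw) (fun p => (hGpos p).le) (0, 0) (hGpos (0, 0))
  have : ∑' p : ℕ × ℕ, (F p + F p.swap) = 2 * ∑' p, F p := by
    rw [Summable.tsum_add hFs hFsw, hswap]; ring
  linarith [this ▸ h2sum]

/-- `x(θ) = −ψ₃(θ)/(2ψ₂(θ)) = (3/2)·S₄(θ)/S₃(θ)`. -/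
noncomputable def xFun (θ : ℝ) : ℝ := 3 / 2 * (S 4 θ / S 3 θ)

lemma S_continuousOn {j : ℕ} (hj : 2 ≤ j) : ContinuousOn (S j) (Ioi (0:ℝ)) := by
  intro θ0 hθ0
  have hθ0' : (0:ℝ) < θ0 := hθ0
  have hhalf : (0:ℝ) < θ0 / 2 := by linarith
  have hcont : ContinuousOn (S j) (Ioi (θ0 / 2)) := by
    apply continuousOn_tsum (u := fun k : ℕ => 1 / (θ0 / 2 + (k : ℝ)) ^ j)
    · intro k
      apply ContinuousOn.div continuousOn_const
      · exact (continuousOn_id.add continuousOn_const).pow j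
      · intro x hx
        have : (0:ℝ) < x + k := base_pos (hhalf.trans hx) k
        exact pow_ne_zero j this.ne'
    · exact S_summable hj hhalf
    · intro k x hx
      have hx0 : (0:ℝ) < x := hhalf.trans hx
      rw [Real.norm_eq_abs, abs_of_nonneg (term_pos hx0 j k).le]
      apply one_div_le_one_div_of_le (pow_pos (base_pos hhalf k) j)
      refine pow_le_pow_left₀ (base_pos hhalf k).le ?_ j
      have : θ0 / 2 < x := hx
      linarith
  exact ((hcont.continuousAt (Ioi_mem_nhds (by linarith))).continuousWithinAt)

lemma xFun_continuousOn : ContinuousOn xFun (Ioi (0:ℝ)) := by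
  apply ContinuousOn.mul continuousOn_const
  exact (S_continuousOn (by norm_num)).div (S_continuousOn (by norm_num))
    fun θ hθ => (S_pos (by norm_num) hθ).ne'

lemma xFun_pos {θ : ℝ} (hθ : 0 < θ) : 0 < xFun θ := by
  unfold xFun
  have := S_pos (j := 4) (by norm_num) hθ
  have := S_pos (j := 3) (by norm_num) hθ
  positivity

lemma xFun_strictAnti : StrictAntiOn xFun (Ioi (0:ℝ)) := by
  intro a ha b hb hab
  have h := S_mul_lt ha hab
  have h3a := S_pos (j := 3) (by norm_num) ha
  have h3b := S_pos (j := 3) (by norm_num) (hb : (0:ℝ) < b)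
  unfold xFun
  have : S 4 b / S 3 b < S 4 a / S 3 a := by
    rw [div_lt_div_iff₀ h3b h3a]
    linarith [h]
  linarith

lemma xFun_upper {θ : ℝ} (hθ : 0 < θ) : xFun θ ≤ 3 / 2 * (1 / θ) := by
  have h43 : S 4 θ ≤ (1 / θ) * S 3 θ := by
    rw [S, S, ← tsum_mul_left]
    apply Summable.tsum_le_tsum _ (S_summable (by norm_num) hθ)
      ((S_summable (j := 3) (by norm_num) hθ).mul_left _)
    intro k
    have hk := base_pos hθ k
    rw [div_mul_div_comm, one_mul]
    apply one_div_le_one_div_of_le (by positivity)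
    calc θ * (θ + k) ^ 3 ≤ (θ + k) * (θ + k) ^ 3 := by
          apply mul_le_mul_of_nonneg_right (by linarith [Nat.cast_nonneg (α := ℝ) k]) (by positivity)
      _ = (θ + k) ^ 4 := by ring
  have h3 := S_pos (j := 3) (by norm_num) hθ
  unfold xFun
  have : S 4 θ / S 3 θ ≤ 1 / θ := by
    rw [div_le_iff₀ h3]; linarith
  linarith

lemma xFun_tendsto_atTop_zero : Tendsto xFun atTop (nhds 0) := by
  apply squeeze_zero' (Eventually.mono (eventually_gt_atTop 0) fun θ hθ => (xFun_pos hθ).le)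
    (Eventually.mono (eventually_gt_atTop 0) fun θ hθ => xFun_upper hθ)
  have : Tendsto (fun θ : ℝ => θ⁻¹) atTop (nhds 0) := tendsto_inv_atTop_zero
  have h := this.const_mul (3 / 2 : ℝ)
  simpa [one_div] using h

lemma xFun_lower {θ : ℝ} (hθ : 0 < θ) (hθ1 : θ ≤ 1) :
    3 / 2 * (1 / (1 + S 3 1)) * (1 / θ) ≤ xFun θ := by
  have hS31 : (0:ℝ) ≤ S 3 1 := S_nonneg one_pos
  have hC : (0:ℝ) < 1 + S 3 1 := by linarith
  have h4 : 1 / θ ^ 4 ≤ S 4 θ := by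
    rw [S]
    have := Summable.le_tsum (S_summable (j := 4) (by norm_num) hθ) 0
      (fun k _ => (term_pos hθ 4 k).le)
    simpa using this
  have h3 : S 3 θ ≤ (1 + S 3 1) / θ ^ 3 := by
    have hsplit : S 3 θ = 1 / θ ^ 3 + ∑' k : ℕ, 1 / (θ + ((k : ℝ) + 1)) ^ 3 := by
      rw [S, Summable.tsum_eq_zero_add (S_summable (j := 3) (by norm_num) hθ)]
      push_cast
      simp
    have htail : (∑' k : ℕ, 1 / (θ + ((k : ℝ) + 1)) ^ 3) ≤ S 3 1 := by
      rw [S]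
      apply Summable.tsum_le_tsum _ (((summable_nat_add_iff 1).mpr
        (S_summable (j := 3) (by norm_num) hθ)).congr fun k => by push_cast; ring_nf)
        (S_summable (by norm_num) one_pos)
      intro k
      apply one_div_le_one_div_of_le (pow_pos (by positivity) 3)
      apply pow_le_pow_left₀ (by positivity)
      push_cast; linarith [Nat.cast_nonneg (α := ℝ) k]
    have hθ3 : (1:ℝ) ≤ 1 / θ ^ 3 := by
      rw [le_div_iff₀ (by positivity)]
      nlinarith [pow_le_one₀ hθ.le hθ1 (n := 3)]
    calc S 3 θ ≤ 1 / θ ^ 3 + S 3 1 := by linarith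
      _ ≤ (1 + S 3 1) / θ ^ 3 := by
          rw [add_div]
          have : S 3 1 ≤ S 3 1 / θ ^ 3 := by
            rw [le_div_iff₀ (by positivity)]
            nlinarith [pow_le_one₀ hθ.le hθ1 (n := 3)]
          linarith
  have hdiv : (1 / θ ^ 4) / ((1 + S 3 1) / θ ^ 3) ≤ S 4 θ / S 3 θ := by
    apply div_le_div₀ (S_nonneg hθ) h4 (S_pos (by norm_num) hθ) h3
  have heq : (1 / θ ^ 4) / ((1 + S 3 1) / θ ^ 3) = 1 / (1 + S 3 1) * (1 / θ) := by
    field_simp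
  unfold xFun
  rw [mul_assoc] at *
  nlinarith [hdiv, heq]

lemma xFun_tendsto_zero_atTop : Tendsto xFun (nhdsWithin 0 (Set.Ioi 0)) atTop := by
  have hS31 : (0:ℝ) ≤ S 3 1 := S_nonneg one_pos
  have hc : (0:ℝ) < 3 / 2 * (1 / (1 + S 3 1)) := by positivity
  have hlim : Tendsto (fun θ : ℝ => 3 / 2 * (1 / (1 + S 3 1)) * (1 / θ))
      (nhdsWithin 0 (Set.Ioi 0)) atTop := by
    have := tendsto_inv_nhdsGT_zero (𝕜 := ℝ)
    have h2 := this.const_mul_atTop hc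
    simpa [one_div] using h2
  apply tendsto_atTop_mono' _ _ hlim
  filter_upwards [Ioo_mem_nhdsGT_of_mem (by simp : (0:ℝ) ∈ Ico 0 1)] with θ hθ
  exact xFun_lower hθ.1 hθ.2.le

/-- The map `θ ↦ x(θ) = (3/2)·S₄(θ)/S₃(θ)` is a continuous, strictly decreasing bijection
from `(0,∞)` onto `(0,∞)`, tending to `+∞` as `θ → 0⁺` and to `0` as `θ → +∞`. -/
theorem xFun_bijective :
    ContinuousOn xFun (Set.Ioi 0) ∧
    StrictAntiOn xFun (Set.Ioi 0) ∧
    Set.BijOn xFun (Set.Ioi 0) (Set.Ioi 0) ∧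
    Filter.Tendsto xFun (nhdsWithin 0 (Set.Ioi 0)) Filter.atTop ∧
    Filter.Tendsto xFun Filter.atTop (nhds 0) := by
  refine ⟨xFun_continuousOn, xFun_strictAnti, ⟨fun θ hθ => xFun_pos hθ,
    xFun_strictAnti.injOn, ?_⟩, xFun_tendsto_zero_atTop, xFun_tendsto_atTop_zero⟩
  intro y hy
  have hy0 : (0:ℝ) < y := hy
  -- pick a close to 0 with xFun a > y
  obtain ⟨a, hay, ha⟩ := ((xFun_tendsto_zero_atTop.eventually_gt_atTop y).and
    eventually_mem_nhdsWithin).exists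
  have ha0 : (0:ℝ) < a := ha
  -- pick b large with xFun b < y and a ≤ b
  obtain ⟨b, hby, hab⟩ := ((xFun_tendsto_atTop_zero.eventually_lt_const hy0).and
    (eventually_ge_atTop a)).exists
  have hsub : Icc a b ⊆ Ioi (0:ℝ) := fun x hx => lt_of_lt_of_le ha0 hx.1
  have hcont : ContinuousOn xFun (Icc a b) := xFun_continuousOn.mono hsub
  have := intermediate_value_Icc' hab hcont
  have hymem : y ∈ Icc (xFun b) (xFun a) := ⟨hby.le, hay.le⟩
  obtain ⟨c, hc, hcy⟩ := this hymem
  exact ⟨c, hsub hc, hcy⟩
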